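/- (Example 2, Case 2.) Let α > 0, β > 1, 0 < σ < 1 and γ > 0, and define G(s) = ∫₀^1 t^{α−1}(1−t)^{β−1}(1−σt)^{−γ} e^{−st} dt for s > 0. Then G is twice differentiable with G(s) > 0 and G′(s) < 0 on (0,∞), and for every s > 0: s · ( G′(s)/G(s) − 2·G″(s)/G′(s) ) ≤ α + 2 + 2γσ/(1−σ). In particular, if α + 2 + 2γσ/(1−σ) ≤ k then G′(s)/G(s) − 2G″(s)/G′(s) ≤ k/s for all s > 0. -/

import Mathlib

/-!
Write `J(p, q, r)` for `∫₀¹ t ^ p (1 - t) ^ q (1 - σ t) ^ (-r) e ^ (-s t) dt`, so that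
`G = J(α - 1, β - 1, γ)`, `-G' = J(α, β - 1, γ)` and `G'' = J(α + 1, β - 1, γ)`. Integration by
parts expresses `s J(p, q, r)` through `J(p - 1, q, r)`, `J(p, q - 1, r)` and `J(p, q, r + 1)`.
After substituting this for `s G'` and `s G''`, the terms with lowered `q` are controlled by
Chebyshev's integral inequality for the comonotone functions `t` and `t / (1 - t)`, and those with
raised `r` by `(1 - σ) t ≤ 1 - σ t`.
-/

open Real MeasureTheory Set

section Chebyshev

variable {X : Type*} [MeasurableSpace X] {μ : Measure X} [SFinite μ] {s : Set X}
  {f g w : X → ℝ}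

/-- Chebyshev's integral inequality. -/
theorem setIntegral_mul_setIntegral_le_of_monovaryOn (hs : MeasurableSet s)
    (hfg : MonovaryOn f g s) (hw : ∀ x ∈ s, 0 ≤ w x) (hw_int : IntegrableOn w s μ)
    (hfw : IntegrableOn (fun x ↦ f x * w x) s μ) (hgw : IntegrableOn (fun x ↦ g x * w x) s μ)
    (hfgw : IntegrableOn (fun x ↦ f x * g x * w x) s μ) :
    (∫ x in s, f x * w x ∂μ) * (∫ x in s, g x * w x ∂μ) ≤
      (∫ x in s, w x ∂μ) * ∫ x in s, f x * g x * w x ∂μ := by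
  set ν := μ.restrict s
  have hmem : ∀ᵐ z ∂ν.prod ν, z ∈ s ×ˢ s := by
    rw [Measure.prod_restrict]
    exact ae_restrict_mem (hs.prod hs)
  -- `∬ (f x - f y) (g x - g y) w x w y ≥ 0`, expanded into four product integrals
  have hnonneg : 0 ≤ ∫ z, (f z.2 - f z.1) * (g z.2 - g z.1) * (w z.1 * w z.2) ∂ν.prod ν := by
    refine integral_nonneg_of_ae ?_
    filter_upwards [hmem] with z hz
    exact mul_nonneg (hfg.sub_mul_sub_nonneg hz.1 hz.2) (mul_nonneg (hw _ hz.1) (hw _ hz.2))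
  have h₁ := hw_int.mul_prod hfgw
  have h₂ := hfgw.mul_prod hw_int
  have h₃ := hfw.mul_prod hgw
  have h₄ := hgw.mul_prod hfw
  have hexpand : (fun z : X × X ↦ (f z.2 - f z.1) * (g z.2 - g z.1) * (w z.1 * w z.2)) =
      fun z ↦ (w z.1 * (f z.2 * g z.2 * w z.2) + f z.1 * g z.1 * w z.1 * w z.2) -
        (f z.1 * w z.1 * (g z.2 * w z.2) + g z.1 * w z.1 * (f z.2 * w z.2)) := by
    ext z; ring
  rw [hexpand, integral_sub, integral_add h₁ h₂, integral_add h₃ h₄,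
    integral_prod_mul w (fun x ↦ f x * g x * w x), integral_prod_mul (fun x ↦ f x * g x * w x) w,
    integral_prod_mul (fun x ↦ f x * w x) (fun x ↦ g x * w x),
    integral_prod_mul (fun x ↦ g x * w x) (fun x ↦ f x * w x)] at hnonneg
  · linarith
  · exact h₁.add h₂
  · exact h₃.add h₄

end Chebyshev

theorem integrableOn_rpow_mul_one_sub_rpow {p q : ℝ} (hp : -1 < p) (hq : -1 < q) :
    IntegrableOn (fun t : ℝ ↦ t ^ p * (1 - t) ^ q) (Ioo 0 1) := by
  -- near `0` the factor `t ^ a` is integrable and `(1 - t) ^ b` continuous; reflect for `1`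
  have hleft : ∀ a b : ℝ, -1 < a →
      IntervalIntegrable (fun t : ℝ ↦ t ^ a * (1 - t) ^ b) volume 0 (1 / 2) := by
    intro a b ha
    refine (intervalIntegral.intervalIntegrable_rpow' ha).mul_continuousOn
      ((continuous_const.sub continuous_id).continuousOn.rpow_const fun x hx ↦ Or.inl ?_)
    rw [uIcc_of_le (by norm_num)] at hx
    exact (sub_pos.2 (by linarith [hx.2] : x < 1)).ne'
  have hright : IntervalIntegrable (fun t : ℝ ↦ t ^ p * (1 - t) ^ q) volume (1 / 2) 1 := by
    have := ((hleft q p hq).comp_sub_left 1).symm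
    norm_num at this
    simpa only [mul_comm] using this
  rw [← intervalIntegrable_iff_integrableOn_Ioo_of_le zero_le_one]
  exact (hleft p q hp).trans hright

theorem hasDerivAt_integral_mul_exp_neg_mul {μ : Measure ℝ} {w : ℝ → ℝ} {R : ℝ}
    (hw : Integrable w μ) (hR : ∀ᵐ t ∂μ, |t| ≤ R) (s : ℝ) :
    HasDerivAt (fun x ↦ ∫ t, w t * exp (-x * t) ∂μ) (-∫ t, t * w t * exp (-s * t) ∂μ) s := by
  have hexp : ∀ x, |x| ≤ |s| + 1 → ∀ t, |t| ≤ R → exp (-x * t) ≤ exp (R * (|s| + 1)) := by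
    intro x hx t ht
    refine exp_le_exp.2 ?_
    calc -x * t ≤ |x| * |t| := by rw [neg_mul, ← abs_mul]; exact neg_le_abs _
      _ ≤ (|s| + 1) * R := mul_le_mul hx ht (abs_nonneg t) (by positivity)
      _ = R * (|s| + 1) := mul_comm _ _
  have hmeas : ∀ x, AEStronglyMeasurable (fun t ↦ w t * exp (-x * t)) μ := fun x ↦
    hw.aestronglyMeasurable.mul (by fun_prop : Continuous fun t ↦ exp (-x * t)).aestronglyMeasurable
  have hint : Integrable (fun t ↦ w t * exp (-s * t)) μ := by
    refine hw.mul_bdd (c := exp (R * (|s| + 1)))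
      (by fun_prop : Continuous fun t ↦ exp (-s * t)).aestronglyMeasurable ?_
    filter_upwards [hR] with t ht
    rw [norm_of_nonneg (exp_pos _).le]
    exact hexp s (by linarith) t ht
  have hderiv := hasDerivAt_integral_of_dominated_loc_of_deriv_le
    (F' := fun x t ↦ -(t * w t * exp (-x * t))) (bound := fun t ↦ R * exp (R * (|s| + 1)) * |w t|)
    (Metric.ball_mem_nhds s one_pos) (.of_forall hmeas) hint
    ((continuous_id.aestronglyMeasurable.mul hw.aestronglyMeasurable).mul
      (by fun_prop : Continuous fun t ↦ exp (-s * t)).aestronglyMeasurable).neg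
    ?_ (hw.abs.const_mul _) (.of_forall fun t x _ ↦ ?_)
  · rw [integral_neg] at hderiv
    exact hderiv.2
  · filter_upwards [hR] with t ht x hx
    have hx' : |x| ≤ |s| + 1 := by
      rw [Metric.mem_ball, dist_eq] at hx
      linarith [abs_sub_abs_le_abs_sub x s]
    rw [norm_neg, norm_mul, norm_mul, norm_eq_abs, norm_eq_abs, norm_of_nonneg (exp_pos _).le]
    calc |t| * |w t| * exp (-x * t) ≤ R * |w t| * exp (R * (|s| + 1)) := by
          have hR₀ : 0 ≤ R := (abs_nonneg t).trans ht
          exact mul_le_mul (mul_le_mul_of_nonneg_right ht (abs_nonneg _)) (hexp x hx' t ht)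
            (exp_pos _).le (by positivity)
      _ = R * exp (R * (|s| + 1)) * |w t| := by ring
  · exact (((hasDerivAt_neg x).mul_const t).exp.const_mul (w t)).congr_deriv (by ring)

noncomputable def genBetaDensity (σ p q r t : ℝ) : ℝ := t ^ p * (1 - t) ^ q * (1 - σ * t) ^ (-r)

noncomputable def genBetaLaplace (σ p q r s : ℝ) : ℝ :=
  ∫ t in Ioo 0 1, genBetaDensity σ p q r t * exp (-s * t)

section GenBeta

variable {σ p q r t : ℝ}

theorem one_sub_mul_pos_of_mem_Icc (hσ : σ < 1) (ht : t ∈ Icc (0 : ℝ) 1) : 0 < 1 - σ * t := by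
  nlinarith [mul_nonneg ht.1 (sub_nonneg.2 hσ.le), ht.2]

theorem genBetaDensity_pos (hσ : σ < 1) (ht : t ∈ Ioo 0 1) : 0 < genBetaDensity σ p q r t := by
  have := one_sub_mul_pos_of_mem_Icc hσ (Ioo_subset_Icc_self ht)
  have := sub_pos.2 ht.2
  have := ht.1
  unfold genBetaDensity
  positivity

theorem mul_genBetaDensity (ht : t ≠ 0) :
    t * genBetaDensity σ p q r t = genBetaDensity σ (p + 1) q r t := by
  unfold genBetaDensity
  rw [rpow_add_one ht]
  ring

theorem div_one_sub_mul_genBetaDensity (ht₀ : t ≠ 0) (ht₁ : t ≠ 1) :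
    t / (1 - t) * genBetaDensity σ p q r t = genBetaDensity σ (p + 1) (q - 1) r t := by
  have : 1 - t ≠ 0 := sub_ne_zero.2 ht₁.symm
  unfold genBetaDensity
  rw [rpow_add_one ht₀, rpow_sub_one this]
  field_simp

theorem one_sub_mul_mul_genBetaDensity (ht : 1 - σ * t ≠ 0) :
    (1 - σ * t) * genBetaDensity σ p q (r + 1) t = genBetaDensity σ p q r t := by
  unfold genBetaDensity
  rw [show -r = -(r + 1) + 1 by ring, rpow_add_one ht]
  ring

theorem hasDerivAt_genBetaDensity (hσ : σ < 1) (ht : t ∈ Ioo 0 1) :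
    HasDerivAt (genBetaDensity σ p q r)
      (p * genBetaDensity σ (p - 1) q r t - q * genBetaDensity σ p (q - 1) r t +
        r * σ * genBetaDensity σ p q (r + 1) t) t := by
  have h₁ := hasDerivAt_rpow_const (p := p) (Or.inl ht.1.ne')
  have h₂ := ((hasDerivAt_id t).const_sub 1).rpow_const (p := q) (Or.inl (sub_pos.2 ht.2).ne')
  have h₃ := (((hasDerivAt_id t).const_mul σ).const_sub 1).rpow_const (p := -r)
    (Or.inl (one_sub_mul_pos_of_mem_Icc hσ (Ioo_subset_Icc_self ht)).ne')
  refine ((h₁.mul h₂).mul h₃).congr_deriv ?_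
  simp only [Pi.mul_apply, id, genBetaDensity, show -(r + 1) = -r - 1 by ring]
  ring

theorem integrableOn_genBetaDensity (hσ : σ < 1) (hp : -1 < p) (hq : -1 < q) (r : ℝ) :
    IntegrableOn (genBetaDensity σ p q r) (Ioo 0 1) :=
  (integrableOn_rpow_mul_one_sub_rpow hp hq).mul_continuousOn_of_subset
    ((by fun_prop : Continuous fun t : ℝ ↦ 1 - σ * t).continuousOn.rpow_const
      fun _ ht ↦ Or.inl (one_sub_mul_pos_of_mem_Icc hσ ht).ne')
    measurableSet_Ioo isCompact_Icc Ioo_subset_Icc_self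

theorem integrableOn_genBetaDensity_mul_exp (hσ : σ < 1) (hp : -1 < p) (hq : -1 < q)
    (r s : ℝ) :
    IntegrableOn (fun t ↦ genBetaDensity σ p q r t * exp (-s * t)) (Ioo 0 1) :=
  (integrableOn_genBetaDensity hσ hp hq r).mul_continuousOn_of_subset
    (by fun_prop : Continuous fun t ↦ exp (-s * t)).continuousOn
    measurableSet_Ioo isCompact_Icc Ioo_subset_Icc_self


theorem genBetaLaplace_pos (hσ : σ < 1) (hp : -1 < p) (hq : -1 < q) (r s : ℝ) :
    0 < genBetaLaplace σ p q r s := by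
  have hpos : ∀ t ∈ Ioo (0 : ℝ) 1, 0 < genBetaDensity σ p q r t * exp (-s * t) :=
    fun t ht ↦ mul_pos (genBetaDensity_pos hσ ht) (exp_pos _)
  rw [genBetaLaplace, setIntegral_pos_iff_support_of_nonneg_ae
    (ae_restrict_of_forall_mem measurableSet_Ioo fun t ht ↦ (hpos t ht).le)
    (integrableOn_genBetaDensity_mul_exp hσ hp hq r s)]
  calc (0 : ENNReal) < volume (Ioo (0 : ℝ) 1) := by simp
    _ ≤ _ := measure_mono fun t ht ↦ show t ∈ Function.support _ ∩ _ from ⟨(hpos t ht).ne', ht⟩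

theorem hasDerivAt_genBetaLaplace (hσ : σ < 1) (hp : -1 < p) (hq : -1 < q) (r s : ℝ) :
    HasDerivAt (genBetaLaplace σ p q r) (-genBetaLaplace σ (p + 1) q r s) s := by
  have h := hasDerivAt_integral_mul_exp_neg_mul (integrableOn_genBetaDensity hσ hp hq r)
    (ae_restrict_of_forall_mem measurableSet_Ioo fun t ht ↦ abs_le.2 ⟨by linarith [ht.1], ht.2.le⟩)
    s
  rwa [genBetaLaplace, setIntegral_congr_fun measurableSet_Ioo fun t ht ↦ by
    rw [← mul_genBetaDensity ht.1.ne']]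

theorem genBetaLaplace_recurrence (hσ : σ < 1) (hp : 0 < p) (hq : 0 < q) (r s : ℝ) :
    s * genBetaLaplace σ p q r s = p * genBetaLaplace σ (p - 1) q r s -
      q * genBetaLaplace σ p (q - 1) r s + r * σ * genBetaLaplace σ p q (r + 1) s := by
  have h₁ := (integrableOn_genBetaDensity_mul_exp (p := p - 1) (q := q) hσ (by linarith)
    (by linarith) r s).const_mul p
  have h₂ := (integrableOn_genBetaDensity_mul_exp (p := p) (q := q - 1) hσ (by linarith)
    (by linarith) r s).const_mul q
  have h₃ := (integrableOn_genBetaDensity_mul_exp (p := p) (q := q) hσ (by linarith)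
    (by linarith) (r + 1) s).const_mul (r * σ)
  have h₄ := (integrableOn_genBetaDensity_mul_exp (p := p) (q := q) hσ (by linarith)
    (by linarith) r s).const_mul s
  have hderiv : ∀ t ∈ Ioo (0 : ℝ) 1, HasDerivAt (fun t ↦ genBetaDensity σ p q r t * exp (-s * t))
      (p * (genBetaDensity σ (p - 1) q r t * exp (-s * t)) -
        q * (genBetaDensity σ p (q - 1) r t * exp (-s * t)) +
        r * σ * (genBetaDensity σ p q (r + 1) t * exp (-s * t)) -
        s * (genBetaDensity σ p q r t * exp (-s * t))) t :=
    fun t ht ↦ ((hasDerivAt_genBetaDensity hσ ht).mul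
      ((hasDerivAt_id' t).const_mul (-s)).exp).congr_deriv (by ring)
  have hcont : ContinuousOn (fun t ↦ genBetaDensity σ p q r t * exp (-s * t)) (Icc 0 1) :=
    (((continuousOn_id.rpow_const fun _ _ ↦ Or.inr hp.le).mul
      ((continuousOn_const.sub continuousOn_id).rpow_const fun _ _ ↦ Or.inr hq.le)).mul
      ((continuousOn_const.sub (continuousOn_const.mul continuousOn_id)).rpow_const
        fun _ ht ↦ Or.inl (one_sub_mul_pos_of_mem_Icc hσ ht).ne')).mul (by fun_prop)
  have hftc := intervalIntegral.integral_eq_sub_of_hasDerivAt_of_le zero_le_one hcont hderiv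
    (by
      rw [intervalIntegrable_iff_integrableOn_Ioo_of_le zero_le_one]
      exact ((h₁.sub h₂).add h₃).sub h₄)
  rw [intervalIntegral.integral_of_le zero_le_one, integral_Ioc_eq_integral_Ioo,
    integral_sub, integral_add, integral_sub, integral_const_mul, integral_const_mul,
    integral_const_mul, integral_const_mul] at hftc
  · have hboundary : genBetaDensity σ p q r 1 * exp (-s * 1) -
        genBetaDensity σ p q r 0 * exp (-s * 0) = 0 := by
      simp [genBetaDensity, zero_rpow hp.ne', zero_rpow hq.ne']
    rw [hboundary] at hftc
    simp only [genBetaLaplace]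
    linarith
  exacts [h₁, h₂, h₁.sub h₂, h₃, (h₁.sub h₂).add h₃, h₄]

theorem genBetaLaplace_mul_le (hσ : σ < 1) (hp : 0 < p) (hq : 0 < q) (r s : ℝ) :
    genBetaLaplace σ p q r s * genBetaLaplace σ p (q - 1) r s ≤
      genBetaLaplace σ (p - 1) q r s * genBetaLaplace σ (p + 1) (q - 1) r s := by
  have hmono : MonotoneOn (fun t : ℝ ↦ t / (1 - t)) (Ioo 0 1) := fun x hx y hy hxy ↦
    div_le_div₀ hy.1.le hxy (sub_pos.2 hy.2) (by linarith)
  have hw := integrableOn_genBetaDensity_mul_exp (p := p - 1) (q := q) hσ (by linarith)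
    (by linarith) r s
  have hf : ∀ t ∈ Ioo (0 : ℝ) 1, genBetaDensity σ p q r t * exp (-s * t) =
      t * (genBetaDensity σ (p - 1) q r t * exp (-s * t)) := fun t ht ↦ by
    rw [← mul_assoc, mul_genBetaDensity ht.1.ne', sub_add_cancel]
  have hg : ∀ t ∈ Ioo (0 : ℝ) 1, genBetaDensity σ p (q - 1) r t * exp (-s * t) =
      t / (1 - t) * (genBetaDensity σ (p - 1) q r t * exp (-s * t)) := fun t ht ↦ by
    rw [← mul_assoc, div_one_sub_mul_genBetaDensity ht.1.ne' ht.2.ne, sub_add_cancel]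
  have hfg : ∀ t ∈ Ioo (0 : ℝ) 1, genBetaDensity σ (p + 1) (q - 1) r t * exp (-s * t) =
      t * (t / (1 - t)) * (genBetaDensity σ (p - 1) q r t * exp (-s * t)) := fun t ht ↦ by
    rw [mul_assoc, ← hg t ht, ← mul_assoc, mul_genBetaDensity ht.1.ne']
  have h := setIntegral_mul_setIntegral_le_of_monovaryOn (f := fun t ↦ t) measurableSet_Ioo
    (monotoneOn_id.monovaryOn hmono) (fun t ht ↦ (mul_pos (genBetaDensity_pos hσ ht)
      (exp_pos _)).le) hw
    ((integrableOn_genBetaDensity_mul_exp hσ (by linarith) (by linarith) r s).congr_fun hf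
      measurableSet_Ioo)
    ((integrableOn_genBetaDensity_mul_exp hσ (by linarith) (by linarith) r s).congr_fun hg
      measurableSet_Ioo)
    ((integrableOn_genBetaDensity_mul_exp hσ (by linarith) (by linarith) r s).congr_fun hfg
      measurableSet_Ioo)
  rwa [← setIntegral_congr_fun measurableSet_Ioo hf, ← setIntegral_congr_fun measurableSet_Ioo hg,
    ← setIntegral_congr_fun measurableSet_Ioo hfg] at h

theorem one_sub_mul_genBetaLaplace_le (hσ : σ < 1) (hp : -1 < p) (hq : -1 < q) (r s : ℝ) :
    (1 - σ) * genBetaLaplace σ (p + 1) q (r + 1) s ≤ genBetaLaplace σ p q r s := by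
  rw [genBetaLaplace, genBetaLaplace, ← integral_const_mul]
  refine setIntegral_mono_on
    ((integrableOn_genBetaDensity_mul_exp hσ (by linarith) hq (r + 1) s).const_mul _)
    (integrableOn_genBetaDensity_mul_exp hσ hp hq r s) measurableSet_Ioo fun t ht ↦ ?_
  have hσt := one_sub_mul_pos_of_mem_Icc hσ (Ioo_subset_Icc_self ht)
  have hD := (mul_pos (genBetaDensity_pos (p := p) (q := q) (r := r + 1) hσ ht)
    (exp_pos (-s * t))).le
  -- `(1 - σ) t ≤ 1 - σ t` because `t ≤ 1`
  calc (1 - σ) * (genBetaDensity σ (p + 1) q (r + 1) t * exp (-s * t))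
      = (1 - σ) * t * (genBetaDensity σ p q (r + 1) t * exp (-s * t)) := by
        rw [← mul_genBetaDensity ht.1.ne']; ring
    _ ≤ (1 - σ * t) * (genBetaDensity σ p q (r + 1) t * exp (-s * t)) :=
        mul_le_mul_of_nonneg_right (by nlinarith [ht.2]) hD
    _ = genBetaDensity σ p q r t * exp (-s * t) := by
        rw [← mul_assoc, one_sub_mul_mul_genBetaDensity hσt.ne']

end GenBeta

theorem mul_two_genBetaLaplace_div_sub_div_le {α β σ γ : ℝ} (hα : 0 < α) (hβ : 1 < β)
    (hσ₀ : 0 ≤ σ) (hσ₁ : σ < 1) (hγ : 0 ≤ γ) (s : ℝ) :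
    s * (2 * genBetaLaplace σ (α + 1) (β - 1) γ s / genBetaLaplace σ α (β - 1) γ s -
      genBetaLaplace σ α (β - 1) γ s / genBetaLaplace σ (α - 1) (β - 1) γ s) ≤
      α + 2 + 2 * γ * σ / (1 - σ) := by
  have hβ' : 0 < β - 1 := sub_pos.2 hβ
  set P₀ := genBetaLaplace σ (α - 1) (β - 1) γ s
  set P₁ := genBetaLaplace σ α (β - 1) γ s
  set P₂ := genBetaLaplace σ (α + 1) (β - 1) γ s
  set Q₁ := genBetaLaplace σ α (β - 1 - 1) γ s
  set Q₂ := genBetaLaplace σ (α + 1) (β - 1 - 1) γ s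
  set R₁ := genBetaLaplace σ α (β - 1) (γ + 1) s
  set R₂ := genBetaLaplace σ (α + 1) (β - 1) (γ + 1) s
  have hP₀ : 0 < P₀ := genBetaLaplace_pos hσ₁ (by linarith) (by linarith) γ s
  have hP₁ : 0 < P₁ := genBetaLaplace_pos hσ₁ (by linarith) (by linarith) γ s
  have hQ₂ : 0 < Q₂ := genBetaLaplace_pos hσ₁ (by linarith) (by linarith) γ s
  have hR₁ : 0 < R₁ := genBetaLaplace_pos hσ₁ (by linarith) (by linarith) (γ + 1) s
  have hrec₁ : s * P₁ = α * P₀ - (β - 1) * Q₁ + γ * σ * R₁ :=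
    genBetaLaplace_recurrence hσ₁ hα hβ' γ s
  have hrec₂ : s * P₂ = (α + 1) * P₁ - (β - 1) * Q₂ + γ * σ * R₂ := by
    simpa only [add_sub_cancel_right] using
      genBetaLaplace_recurrence (p := α + 1) hσ₁ (by linarith) hβ' γ s
  have hcheb : P₁ * Q₁ ≤ P₀ * Q₂ := genBetaLaplace_mul_le hσ₁ hα hβ' γ s
  have hR₂ : R₂ ≤ P₁ / (1 - σ) := by
    rw [le_div_iff₀ (sub_pos.2 hσ₁), mul_comm]
    exact one_sub_mul_genBetaLaplace_le hσ₁ (by linarith) (by linarith) γ s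
  rw [show s * (2 * P₂ / P₁ - P₁ / P₀) = (2 * (s * P₂) * P₀ - (s * P₁) * P₁) / (P₀ * P₁) by
    field_simp, div_le_iff₀ (by positivity), hrec₁, hrec₂]
  have hσγ : 0 ≤ γ * σ := mul_nonneg hγ hσ₀
  have hR₂' : 2 * γ * σ * R₂ * P₀ ≤ 2 * γ * σ / (1 - σ) * (P₀ * P₁) :=
    calc 2 * γ * σ * R₂ * P₀ ≤ 2 * γ * σ * (P₁ / (1 - σ)) * P₀ := by gcongr
      _ = 2 * γ * σ / (1 - σ) * (P₀ * P₁) := by ring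
  nlinarith [mul_le_mul_of_nonneg_left hcheb hβ'.le, mul_pos hβ' (mul_pos hQ₂ hP₀),
    mul_nonneg hσγ (mul_pos hR₁ hP₁).le]

theorem stmt19 (α β σ γ : ℝ) (hα : 0 < α) (hβ : 1 < β)
    (hσ0 : 0 < σ) (hσ1 : σ < 1) (hγ : 0 < γ)
    (G : ℝ → ℝ)
    (hG : ∀ s : ℝ, G s = ∫ t in Set.Ioo (0 : ℝ) 1,
      t ^ (α - 1) * (1 - t) ^ (β - 1) * (1 - σ * t) ^ (-γ) * Real.exp (-s * t)) :
    (∀ s > (0 : ℝ), DifferentiableAt ℝ G s ∧ DifferentiableAt ℝ (deriv G) s) ∧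
    (∀ s > (0 : ℝ), 0 < G s ∧ deriv G s < 0) ∧
    (∀ s > (0 : ℝ),
      s * (deriv G s / G s - 2 * deriv (deriv G) s / deriv G s) ≤ α + 2 + 2 * γ * σ / (1 - σ)) ∧
    (∀ k : ℕ, α + 2 + 2 * γ * σ / (1 - σ) ≤ k → ∀ s > (0 : ℝ),
      deriv G s / G s - 2 * deriv (deriv G) s / deriv G s ≤ k / s) := by
  have hG₀ : G = genBetaLaplace σ (α - 1) (β - 1) γ := funext hG
  have hG₁ : ∀ s, HasDerivAt G (-genBetaLaplace σ α (β - 1) γ s) s := fun s ↦ by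
    simpa only [hG₀, sub_add_cancel] using
      hasDerivAt_genBetaLaplace (p := α - 1) hσ1 (by linarith) (by linarith) γ s
  have hderiv : deriv G = -genBetaLaplace σ α (β - 1) γ := funext fun s ↦ (hG₁ s).deriv
  have hG₂ : ∀ s, HasDerivAt (deriv G) (genBetaLaplace σ (α + 1) (β - 1) γ s) s := fun s ↦ by
    simpa only [hderiv, neg_neg] using
      (hasDerivAt_genBetaLaplace (p := α) hσ1 (by linarith) (by linarith) γ s).neg
  have hbound : ∀ s > (0 : ℝ), s * (deriv G s / G s - 2 * deriv (deriv G) s / deriv G s) ≤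
      α + 2 + 2 * γ * σ / (1 - σ) := fun s _ ↦ by
    rw [(hG₂ s).deriv, hderiv, hG₀, Pi.neg_apply]
    convert mul_two_genBetaLaplace_div_sub_div_le hα hβ hσ0.le hσ1 hγ.le s using 2
    ring
  refine ⟨fun s _ ↦ ⟨(hG₁ s).differentiableAt, (hG₂ s).differentiableAt⟩, fun s _ ↦ ⟨?_, ?_⟩,
    hbound, fun k hk s hs ↦ ?_⟩
  · exact hG₀ ▸ genBetaLaplace_pos hσ1 (by linarith) (by linarith) γ s
  · exact hderiv ▸ neg_neg_of_pos (genBetaLaplace_pos hσ1 (by linarith) (by linarith) γ s)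
  · rw [le_div_iff₀ hs, mul_comm]
    exact (hbound s hs).trans hk
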